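/- For even n ≥ 2, Player 2 has a winning strategy for REL(Dic_n, {a,x}), obtained by mirroring: whenever Player 1 plays a generator g ∈ {a, a⁻¹, x, x⁻¹}, Player 2 replies with the same generator g. -/
import Mathlib


namespace RelatorGames

variable {G : Type*} [Group G]

/-- The letters available in the relator games: elements of `S` and their inverses. -/
def letters (S : Set G) : Set G := S ∪ (fun g => g⁻¹) '' S

/-- Evaluate a history of moves (most recent letter first) to a group element:
the group element represented by the word built so far. -/
def eval (h : List G) : G := h.reverse.prod

/-- A move `m` is legal after history `h`: it is a letter of `S ∪ S⁻¹` and it is not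
the inverse of the immediately preceding letter (no backtracking). -/
def LegalMove (S : Set G) (h : List G) (m : G) : Prop :=
  m ∈ letters S ∧ ∀ p ∈ h.head?, m ≠ p⁻¹

/-- Appending `m` to the history `h` produces a word equal in `G` to some earlier
prefix of the word (equivalently, the walk in the Cayley graph revisits a vertex). -/
def ClosesCycle (h : List G) (m : G) : Prop :=
  ∃ t, t <:+ h ∧ eval t = eval (m :: h)

/-- A strategy: a choice of next letter given the history (most recent letter first). -/
abbrev Strategy (G : Type*) := List G → G

/-- The sequence of histories arising when the first player (moving at even steps)
uses `σ` and the second player (moving at odd steps) uses `τ`. -/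
def hist (σ τ : Strategy G) : ℕ → List G
  | 0 => []
  | k + 1 =>
      (if k % 2 = 0 then σ (hist σ τ k) else τ (hist σ τ k)) :: hist σ τ k

/-- The move made at step `k` in the play of `σ` against `τ`. -/
def moveAt (σ τ : Strategy G) (k : ℕ) : G :=
  if k % 2 = 0 then σ (hist σ τ k) else τ (hist σ τ k)

/-- Step `j` is uneventful: the move made is legal and does not close a cycle. -/
def Ok (S : Set G) (σ τ : Strategy G) (j : ℕ) : Prop :=
  LegalMove S (hist σ τ j) (moveAt σ τ j) ∧ ¬ ClosesCycle (hist σ τ j) (moveAt σ τ j)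

/-- In the play of `σ` against `τ`, the player moving at steps congruent to `p` mod 2
wins the relator achievement game `REL(G,S)`: at the first eventful step, either it is
that player's turn and they legally close a cycle, or it is the opponent's turn and the
opponent has made an illegal move (in particular, has no legal move). -/
def RelWins (S : Set G) (p : ℕ) (σ τ : Strategy G) : Prop :=
  ∃ k : ℕ, (∀ j < k, Ok S σ τ j) ∧
    ((k % 2 = p ∧ LegalMove S (hist σ τ k) (moveAt σ τ k) ∧
        ClosesCycle (hist σ τ k) (moveAt σ τ k)) ∨
      (k % 2 ≠ p ∧ ¬ LegalMove S (hist σ τ k) (moveAt σ τ k)))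

/-- In the play of `σ` against `τ`, the player moving at steps congruent to `p` mod 2
wins the relator avoidance game `RAV(G,S)`: at the first eventful step it is the
opponent's turn, and the opponent either makes an illegal move (in particular, has no
legal move) or closes a cycle. -/
def RavWins (S : Set G) (p : ℕ) (σ τ : Strategy G) : Prop :=
  ∃ k : ℕ, (∀ j < k, Ok S σ τ j) ∧ k % 2 ≠ p ∧
    (¬ LegalMove S (hist σ τ k) (moveAt σ τ k) ∨ ClosesCycle (hist σ τ k) (moveAt σ τ k))

/-- Player 1 has a winning strategy for `REL(G,S)`. -/
def FirstWinsREL (S : Set G) : Prop :=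
  ∃ σ : Strategy G, ∀ τ : Strategy G, RelWins S 0 σ τ

/-- Player 2 has a winning strategy for `REL(G,S)`. -/
def SecondWinsREL (S : Set G) : Prop :=
  ∃ τ : Strategy G, ∀ σ : Strategy G, RelWins S 1 σ τ

/-- Player 1 has a winning strategy for `RAV(G,S)`. -/
def FirstWinsRAV (S : Set G) : Prop :=
  ∃ σ : Strategy G, ∀ τ : Strategy G, RavWins S 0 σ τ

/-- Player 2 has a winning strategy for `RAV(G,S)`. -/
def SecondWinsRAV (S : Set G) : Prop :=
  ∃ τ : Strategy G, ∀ σ : Strategy G, RavWins S 1 σ τ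

end RelatorGames


namespace RelMirrorAux

open RelatorGames QuaternionGroup

variable {G : Type*} [Group G]

theorem eval_cons (m : G) (h : List G) : eval (m :: h) = eval h * m := by
  simp [eval]

theorem hist_succ (σ τ : Strategy G) (k : ℕ) :
    hist σ τ (k + 1) = moveAt σ τ k :: hist σ τ k := rfl

theorem hist_suffix (σ τ : Strategy G) {i j : ℕ} (h : i ≤ j) :
    hist σ τ i <:+ hist σ τ j := by
  induction j with
  | zero =>
    have : i = 0 := by omega
    subst this; exact List.suffix_refl _
  | succ j ih =>
    rcases Nat.lt_or_ge i (j + 1) with h' | h'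
    · exact (ih (by omega)).trans (List.suffix_cons _ _)
    · have : i = j + 1 := by omega
      subst this; exact List.suffix_refl _

theorem suffix_eq_hist (σ τ : Strategy G) {k : ℕ} {t : List G} (h : t <:+ hist σ τ k) :
    ∃ j ≤ k, t = hist σ τ j := by
  induction k with
  | zero => exact ⟨0, le_refl 0, List.suffix_nil.mp h⟩
  | succ k ih =>
    rw [hist_succ] at h
    rcases List.suffix_cons_iff.mp h with h' | h'
    · exact ⟨k + 1, le_refl _, by rw [h', hist_succ]⟩
    · obtain ⟨j, hj, rfl⟩ := ih h'
      exact ⟨j, by omega, rfl⟩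

theorem eval_ne (S : Set G) (σ τ : Strategy G) {k i j : ℕ}
    (hOk : ∀ j' < k, Ok S σ τ j') (hij : i < j) (hjk : j ≤ k) :
    eval (hist σ τ i) ≠ eval (hist σ τ j) := by
  obtain ⟨j', rfl⟩ : ∃ j', j = j' + 1 := ⟨j - 1, by omega⟩
  intro hEq
  exact (hOk j' (by omega)).2 ⟨hist σ τ i, hist_suffix σ τ (by omega), by rwa [← hist_succ]⟩

variable {n : ℕ}

/-- The mirroring strategy. -/
def mir : Strategy (QuaternionGroup n) := fun h => h.head?.getD 1

/-- Exponent parity map. -/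
def par {n : ℕ} : ZMod (2 * n) →+* ZMod 2 := ZMod.castHom ⟨n, rfl⟩ (ZMod 2)

theorem inv_a (i : ZMod (2 * n)) : (a i)⁻¹ = a (-i) := rfl

theorem inv_xa (i : ZMod (2 * n)) : (xa i)⁻¹ = xa ((n : ZMod (2 * n)) + i) := rfl

theorem hnn : ((n : ZMod (2 * n))) + (n : ZMod (2 * n)) = 0 := by
  have h := ZMod.natCast_self (2 * n)
  push_cast at h
  linear_combination h

theorem mem_letters_iff (m : QuaternionGroup n) :
    m ∈ letters ({a 1, xa 0} : Set (QuaternionGroup n)) ↔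
      m = a 1 ∨ m = a (-1) ∨ m = xa 0 ∨ m = xa (n : ZMod (2 * n)) := by
  simp only [letters, Set.mem_union, Set.mem_image, Set.mem_insert_iff,
    Set.mem_singleton_iff]
  constructor
  · rintro ((rfl | rfl) | ⟨y, (rfl | rfl), rfl⟩)
    · exact Or.inl rfl
    · exact Or.inr (Or.inr (Or.inl rfl))
    · exact Or.inr (Or.inl rfl)
    · refine Or.inr (Or.inr (Or.inr ?_))
      rw [inv_xa, add_zero]
  · rintro (rfl | rfl | rfl | rfl)
    · exact Or.inl (Or.inl rfl)
    · exact Or.inr ⟨a 1, Or.inl rfl, rfl⟩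
    · exact Or.inl (Or.inr rfl)
    · exact Or.inr ⟨xa 0, Or.inr rfl, by rw [inv_xa, add_zero]⟩

theorem key {i i' : ZMod (2 * n)} {m g : QuaternionGroup n}
    (hm : m = a 1 ∨ m = a (-1) ∨ m = xa 0 ∨ m = xa (n : ZMod (2 * n)))
    (hg : g = a 1 ∨ g = a (-1) ∨ g = xa 0 ∨ g = xa (n : ZMod (2 * n)))
    (heq : a i * m = a i' * g) :
    (m = g ∧ (a i : QuaternionGroup n) = a i') ∨
      (m = g⁻¹ ∧ (a i : QuaternionGroup n) = a i' * g * g) := by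
  have e1 : (a 1 : QuaternionGroup n) = (a (-1))⁻¹ :=
    eq_inv_of_mul_eq_one_left (by rw [a_mul_a, one_def]; congr 1; ring)
  have e2 : (a (-1) : QuaternionGroup n) = (a 1)⁻¹ :=
    eq_inv_of_mul_eq_one_left (by rw [a_mul_a, one_def]; congr 1; ring)
  have e3 : (xa 0 : QuaternionGroup n) = (xa (n : ZMod (2 * n)))⁻¹ :=
    eq_inv_of_mul_eq_one_left (by rw [xa_mul_xa, one_def, sub_zero, hnn])
  have e4 : (xa (n : ZMod (2 * n)) : QuaternionGroup n) = (xa 0)⁻¹ :=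
    eq_inv_of_mul_eq_one_left (by rw [xa_mul_xa, one_def]; congr 1; ring)
  rcases hm with rfl | rfl | rfl | rfl <;> rcases hg with rfl | rfl | rfl | rfl <;>
    first
      | exact Or.inl ⟨rfl, mul_right_cancel heq⟩
      | exact Or.inr ⟨e1, by rw [← heq, e1]; group⟩
      | exact Or.inr ⟨e2, by rw [← heq, e2]; group⟩
      | exact Or.inr ⟨e3, by rw [← heq, e3]; group⟩
      | exact Or.inr ⟨e4, by rw [← heq, e4]; group⟩
      | (simp only [a_mul_a, a_mul_xa, xa_mul_a, xa_mul_xa] at heq; exact absurd heq (by simp))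

end RelMirrorAux

namespace RelMirrorAux

open RelatorGames QuaternionGroup

variable {n : ℕ}

theorem moveAt_mirror (σ : Strategy (QuaternionGroup n)) (k : ℕ) (hk : k % 2 = 0) :
    moveAt σ (mir (n := n)) (k + 1) = moveAt σ mir k := by
  unfold moveAt
  rw [if_neg (by omega), if_pos hk, hist_succ]
  show (moveAt σ mir k :: hist σ mir k).head?.getD 1 = _
  rw [List.head?_cons, Option.getD_some]
  unfold moveAt
  rw [if_pos hk]

theorem par_natCast : par ((n : ℕ) : ZMod (2 * n)) = ((n : ℕ) : ZMod 2) :=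
  map_natCast _ n

/-- Even-position invariant: the word value is `a i` with even exponent. -/
def IsEv (v : QuaternionGroup n) : Prop :=
  ∃ i : ZMod (2 * n), v = a i ∧ par i = 0

theorem isEv_step (hne : Even n) {v : QuaternionGroup n} (hv : IsEv v)
    {g : QuaternionGroup n}
    (hg : g = a 1 ∨ g = a (-1) ∨ g = xa 0 ∨ g = xa (n : ZMod (2 * n))) :
    IsEv (v * g * g) := by
  obtain ⟨i, rfl, hi⟩ := hv
  have hparn : par ((n : ℕ) : ZMod (2 * n)) = 0 := by
    rw [par_natCast, ZMod.natCast_eq_zero_iff]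
    exact hne.two_dvd
  rcases hg with rfl | rfl | rfl | rfl
  · exact ⟨_, rfl, by rw [map_add, map_add, hi, map_one]; decide⟩
  · exact ⟨_, rfl, by rw [map_add, map_add, hi, map_neg, map_one]; decide⟩
  · refine ⟨_, rfl, ?_⟩
    simp only [map_sub, map_add, map_zero, hparn, hi]
    decide
  · refine ⟨_, rfl, ?_⟩
    simp only [map_sub, map_add, map_zero, hparn, hi]
    decide

theorem isEv_hist (hne : Even n) (σ : Strategy (QuaternionGroup n)) (t : ℕ)
    (hOk : ∀ j < 2 * t, Ok ({a 1, xa 0} : Set (QuaternionGroup n)) σ mir j) :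
    IsEv (eval (hist σ (mir (n := n)) (2 * t))) := by
  induction t with
  | zero => exact ⟨0, rfl, map_zero _⟩
  | succ t ih =>
    have h2 : 2 * (t + 1) = 2 * t + 1 + 1 := by ring
    rw [h2, hist_succ, eval_cons, hist_succ, eval_cons]
    rw [moveAt_mirror σ (2 * t) (by omega)]
    exact isEv_step hne (ih fun j hj => hOk j (by omega))
      ((mem_letters_iff _).mp (hOk (2 * t) (by omega)).1.1)

theorem letter_ne_inv (hn : 2 ≤ n) (w : QuaternionGroup n)
    (hw : w ∈ letters ({a 1, xa 0} : Set (QuaternionGroup n))) : w ≠ w⁻¹ := by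
  have hcast : ∀ m : ℕ, ((m : ZMod (2 * n)) = 0) → 2 * n ∣ m := fun m h =>
    (ZMod.natCast_eq_zero_iff m (2 * n)).mp h
  rcases (mem_letters_iff w).mp hw with rfl | rfl | rfl | rfl
  · rw [inv_a]
    intro h
    injection h with h'
    have h2 : ((2 : ℕ) : ZMod (2 * n)) = 0 := by push_cast; linear_combination h'
    have := Nat.le_of_dvd (by omega) (hcast 2 h2)
    omega
  · rw [inv_a, neg_neg]
    intro h
    injection h with h'
    have h2 : ((2 : ℕ) : ZMod (2 * n)) = 0 := by push_cast; linear_combination - h'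
    have := Nat.le_of_dvd (by omega) (hcast 2 h2)
    omega
  · rw [inv_xa, add_zero]
    intro h
    injection h with h'
    have := Nat.le_of_dvd (by omega) (hcast n h'.symm)
    omega
  · rw [inv_xa, hnn]
    intro h
    injection h with h'
    have := Nat.le_of_dvd (by omega) (hcast n h')
    omega

end RelMirrorAux

open RelatorGames RelMirrorAux QuaternionGroup in
/-- For even `n ≥ 2`, Player 2 has a winning strategy for
`REL(Dic_n, {a,x})`, obtained by mirroring Player 1's previous move. -/
theorem rel_dicyclic_even_second_wins_mirror (n : ℕ) (hn : 2 ≤ n) (heven : Even n) :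
    ∀ σ : Strategy (QuaternionGroup n),
      RelWins ({QuaternionGroup.a 1, QuaternionGroup.xa 0} : Set (QuaternionGroup n)) 1
        σ (fun h => h.head?.getD 1) := by
  intro σ
  haveI : NeZero n := ⟨by omega⟩
  set S : Set (QuaternionGroup n) := {a 1, xa 0} with hS
  show RelWins S 1 σ mir
  classical
  -- there is an eventful step
  have hex : ∃ k, ¬ Ok S σ (mir (n := n)) k := by
    by_contra hall
    push_neg at hall
    obtain ⟨i, j, hne', hEq⟩ :=
      Finite.exists_ne_map_eq_of_infinite (fun k => eval (hist σ (mir (n := n)) k))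
    rcases hne'.lt_or_gt with h | h
    · exact eval_ne S σ mir (fun j' _ => hall j') h (le_refl j) hEq
    · exact eval_ne S σ mir (fun j' _ => hall j') h (le_refl i) hEq.symm
  obtain ⟨k, hkev, hOk⟩ : ∃ k, ¬ Ok S σ (mir (n := n)) k ∧
      ∀ j < k, Ok S σ (mir (n := n)) j :=
    ⟨Nat.find hex, Nat.find_spec hex, fun j hj => not_not.mp (Nat.find_min hex hj)⟩
  refine ⟨k, hOk, ?_⟩
  rcases Nat.even_or_odd k with hk2 | hk2
  · -- k even : Player 1's move
    have hk2' : k % 2 = 0 := Nat.even_iff.mp hk2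
    by_cases hleg : LegalMove S (hist σ mir k) (moveAt σ mir k)
    · exfalso
      have hclose : ClosesCycle (hist σ mir k) (moveAt σ mir k) := by
        by_contra hc; exact hkev ⟨hleg, hc⟩
      obtain ⟨t0, hsuf, hev⟩ := hclose
      obtain ⟨j, hjk, rfl⟩ := suffix_eq_hist σ mir hsuf
      rw [eval_cons] at hev
      obtain ⟨t, htk⟩ : ∃ t, k = 2 * t := ⟨k / 2, by omega⟩
      have hvE : IsEv (eval (hist σ (mir (n := n)) k)) := by
        rw [htk]; exact isEv_hist heven σ t fun j' hj' => hOk j' (by omega)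
      obtain ⟨i, hvi, hpi⟩ := hvE
      have hm4 := (mem_letters_iff (moveAt σ (mir (n := n)) k)).mp hleg.1
      rcases Nat.even_or_odd j with hj2 | hj2
      · -- landing on an even-position value: parity contradiction
        obtain ⟨s, hjs⟩ : ∃ s, j = 2 * s := ⟨j / 2, by have := Nat.even_iff.mp hj2; omega⟩
        have huE : IsEv (eval (hist σ (mir (n := n)) j)) := by
          rw [hjs]; exact isEv_hist heven σ s fun j' hj' => hOk j' (by omega)
        obtain ⟨i'', hvi'', hpi''⟩ := huE
        rw [hvi'', hvi] at hev
        rcases hm4 with hm | hm | hm | hm <;> rw [hm] at hev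
        · rw [a_mul_a] at hev
          injection hev with h'
          have := congrArg par h'
          rw [map_add, hpi, hpi'', map_one] at this
          exact absurd this (by decide)
        · rw [a_mul_a] at hev
          injection hev with h'
          have := congrArg par h'
          rw [map_add, hpi, hpi'', map_neg, map_one] at this
          exact absurd this (by decide)
        · rw [a_mul_xa] at hev; exact absurd hev (by simp)
        · rw [a_mul_xa] at hev; exact absurd hev (by simp)
      · -- landing on an odd-position value
        obtain ⟨j', rfl⟩ : ∃ j', j = j' + 1 := ⟨j - 1, by have := Nat.odd_iff.mp hj2; omega⟩
        have hj'2 : j' % 2 = 0 := by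
          have := Nat.odd_iff.mp hj2; omega
        have hjltk : j' + 1 < k := by
          have := Nat.odd_iff.mp hj2; omega
        have huE : IsEv (eval (hist σ (mir (n := n)) j')) := by
          obtain ⟨s, hjs⟩ : ∃ s, j' = 2 * s := ⟨j' / 2, by omega⟩
          rw [hjs]; exact isEv_hist heven σ s fun j'' hj'' => hOk j'' (by omega)
        obtain ⟨i', hu, hpi'⟩ := huE
        have hg4 := (mem_letters_iff (moveAt σ (mir (n := n)) j')).mp
          (hOk j' (by omega)).1.1
        rw [hist_succ, eval_cons, hu, hvi] at hev
        rcases key hm4 hg4 hev.symm with ⟨hmg, hii⟩ | ⟨hmg, hii⟩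
        · -- same move: earlier even positions coincide
          refine eval_ne S σ mir hOk (show j' < k by omega) (le_refl k) ?_
          rw [hu, hvi, hii]
        · -- inverse move: would equal position j'+2
          have hev2 : eval (hist σ (mir (n := n)) (j' + 1 + 1)) =
              eval (hist σ (mir (n := n)) k) := by
            rw [hist_succ, eval_cons, hist_succ, eval_cons, hu,
              moveAt_mirror σ j' hj'2, hvi, ← hii]
          rcases Nat.lt_or_ge (j' + 2) k with hlt | hge
          · exact eval_ne S σ mir hOk (show j' + 1 + 1 < k by omega) (le_refl k) hev2
          · have hkeq : j' + 1 + 1 = k := by omega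
            have hhead : (hist σ (mir (n := n)) k).head? =
                some (moveAt σ (mir (n := n)) j') := by
              rw [← hkeq, hist_succ, List.head?_cons, moveAt_mirror σ j' hj'2]
            exact hleg.2 (moveAt σ (mir (n := n)) j') (by simp [hhead]) hmg
    · exact Or.inr ⟨by omega, hleg⟩
  · -- k odd : Player 2 legally closes a cycle
    have hk2' : k % 2 = 1 := Nat.odd_iff.mp hk2
    obtain ⟨k', rfl⟩ : ∃ k', k = k' + 1 := ⟨k - 1, by omega⟩
    have hk'2 : k' % 2 = 0 := by omega
    have hmv : moveAt σ (mir (n := n)) (k' + 1) = moveAt σ mir k' :=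
      moveAt_mirror σ k' hk'2
    have hprev := (hOk k' (by omega)).1.1
    have hleg : LegalMove S (hist σ mir (k' + 1)) (moveAt σ mir (k' + 1)) := by
      refine ⟨hmv ▸ hprev, ?_⟩
      intro p hp
      have hp' : p = moveAt σ (mir (n := n)) k' := by
        rw [hist_succ, List.head?_cons] at hp
        exact (Option.some_inj.mp hp).symm
      rw [hp', hmv]
      exact letter_ne_inv hn _ hprev
    have hclose : ClosesCycle (hist σ mir (k' + 1)) (moveAt σ mir (k' + 1)) := by
      by_contra hc; exact hkev ⟨hleg, hc⟩
    exact Or.inl ⟨hk2', hleg, hclose⟩
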